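/- arXiv:2206.09919 — 2 statements merged into one kernel-verified Lean document; each statement's English description precedes it below -/
import Mathlib

section
/- (Jackson-type bound for trigonometric interpolation) Let f : ℝ → ℝ be 2π-periodic and let S_n be the trigonometric polynomial of degree n with coefficients c = a_0/2, a_s = (2/(2n+1)) ∑_{k=1}^{2n+1} f(θ_k) cos(sθ_k), b_s = (2/(2n+1)) ∑_{k=1}^{2n+1} f(θ_k) sin(sθ_k), at equidistant nodes θ_k = 2π(k−1)/(2n+1). If |f(θ_k)| ≤ f_max for all k, then |S_n(θ)| ≤ 5 f_max log(n) for all θ (for n ≥ 2). -/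
/-!
Expanding the discrete Fourier coefficients writes the interpolant as
`S_n(θ) = (2n+1)⁻¹ ∑ₖ f(θₖ) Dₙ(θ - θₖ)` with the Dirichlet kernel
`Dₙ(x) = 1 + 2 ∑ cos(sx) = sin((2n+1)x/2) / sin(x/2)`, so `|S_n(θ)| ≤ f_max` times the
Lebesgue sum `(2n+1)⁻¹ ∑ₖ |Dₙ(θ - θₖ)|`. That sum is periodic in `θ` with the node spacing `h`,
so `θ` may be taken within `h/2` of a node. The `k`-th node on either side is then at distance at
least `(k - 1/2) h`, where `|Dₙ| ≤ 1 / sin((2k-1)π/(2(2n+1)))`; Jordan's inequality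
`sin x ≥ 2x/π` bounds these by `(2n+1)/(2k-1)`, which sum to a harmonic number, i.e. a logarithm.
-/

/-- The equidistant interpolation nodes `θ_k = 2πk/(2n+1)`. -/
noncomputable def node (n : ℕ) (k : Fin (2 * n + 1)) : ℝ :=
  2 * Real.pi * (k : ℕ) / (2 * n + 1)

/-- The degree-`n` trigonometric interpolation polynomial built from the node values `v`
via the discrete Fourier coefficients `a_s = (2/(2n+1)) ∑ₖ v_k cos(sθ_k)`,
`b_s = (2/(2n+1)) ∑ₖ v_k sin(sθ_k)`, `c = a₀/2`. -/
noncomputable def trigInterp (n : ℕ) (v : Fin (2 * n + 1) → ℝ) (θ : ℝ) : ℝ :=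
  (1 / (2 * (n : ℝ) + 1)) * ∑ k, v k +
    ∑ s ∈ Finset.Icc 1 n,
      (((2 / (2 * (n : ℝ) + 1)) * ∑ k, v k * Real.cos (s * node n k)) * Real.cos (s * θ) +
       ((2 / (2 * (n : ℝ) + 1)) * ∑ k, v k * Real.sin (s * node n k)) * Real.sin (s * θ))

open Real Finset Function

noncomputable def dirichletKernel (n : ℕ) (x : ℝ) : ℝ :=
  1 + 2 * ∑ s ∈ Icc 1 n, cos (s * x)

theorem dirichletKernel_neg (n : ℕ) (x : ℝ) : dirichletKernel n (-x) = dirichletKernel n x := by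
  simp [dirichletKernel]

theorem dirichletKernel_abs (n : ℕ) (x : ℝ) : dirichletKernel n |x| = dirichletKernel n x := by
  rcases abs_choice x with h | h <;> simp [h, dirichletKernel_neg]

theorem dirichletKernel_periodic (n : ℕ) : Periodic (dirichletKernel n) (2 * π) := fun x => by
  simp only [dirichletKernel, mul_add, cos_add_nat_mul_two_pi]

theorem abs_dirichletKernel_le (n : ℕ) (x : ℝ) : |dirichletKernel n x| ≤ 2 * n + 1 := by
  have hcos : |∑ s ∈ Icc 1 n, cos (s * x)| ≤ n :=
    calc |∑ s ∈ Icc 1 n, cos (s * x)| ≤ ∑ s ∈ Icc 1 n, |cos (s * x)| := abs_sum_le_sum_abs _ _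
      _ ≤ ∑ s ∈ Icc 1 n, 1 := sum_le_sum fun s _ => abs_cos_le_one _
      _ = n := by simp
  calc |dirichletKernel n x| ≤ |1| + |2 * ∑ s ∈ Icc 1 n, cos (s * x)| := abs_add_le _ _
    _ ≤ 2 * n + 1 := by rw [abs_one, abs_mul, abs_two]; linarith

theorem sin_half_mul_dirichletKernel (n : ℕ) (x : ℝ) :
    sin (x / 2) * dirichletKernel n x = sin ((2 * n + 1) * x / 2) := by
  induction n with
  | zero => simp [dirichletKernel]
  | succ n ih =>
    rw [dirichletKernel, sum_Icc_succ_top (by omega)]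
    rw [dirichletKernel] at ih
    push_cast at ih ⊢
    rw [show (2 * ((n : ℝ) + 1) + 1) * x / 2 = (n + 1) * x + x / 2 by ring, sin_add]
    rw [show (2 * (n : ℝ) + 1) * x / 2 = (n + 1) * x - x / 2 by ring, sin_sub] at ih
    linear_combination ih

theorem abs_dirichletKernel_le_inv_sin (n : ℕ) {x t : ℝ} (ht : 0 < t) (htx : t ≤ |x| / 2)
    (hx : |x| ≤ π) : |dirichletKernel n x| ≤ 1 / sin t := by
  rw [← dirichletKernel_abs]
  have hsin_t : 0 < sin t := sin_pos_of_pos_of_lt_pi ht (by linarith [pi_pos])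
  have hsin_le : sin t ≤ sin (|x| / 2) :=
    sin_le_sin_of_le_of_le_pi_div_two (by linarith [pi_pos]) (by linarith) htx
  have hsin_x : 0 < sin (|x| / 2) := hsin_t.trans_le hsin_le
  have hD : dirichletKernel n |x| = sin ((2 * n + 1) * |x| / 2) / sin (|x| / 2) := by
    rw [eq_div_iff hsin_x.ne', mul_comm, sin_half_mul_dirichletKernel]
  rw [hD, abs_div, abs_of_pos hsin_x, div_le_div_iff₀ hsin_x hsin_t, one_mul]
  exact (mul_le_of_le_one_left hsin_t.le (abs_sin_le_one _)).trans hsin_le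

theorem trigInterp_eq_sum_dirichletKernel (n : ℕ) (v : Fin (2 * n + 1) → ℝ) (θ : ℝ) :
    trigInterp n v θ = 1 / (2 * n + 1) * ∑ k, v k * dirichletKernel n (θ - node n k) := by
  simp only [trigInterp, dirichletKernel, mul_sub, cos_sub, mul_add, mul_one, mul_sum,
    sum_add_distrib, sum_mul]
  congr 2 <;>
  · rw [sum_comm]
    exact sum_congr rfl fun s _ => sum_congr rfl fun k _ => by ring

theorem periodic_sum_range_sub_mul {M : Type*} [AddCommMonoid M] {g : ℝ → M} {c : ℝ} (N : ℕ)
    (hg : Periodic g (N * c)) : Periodic (fun x => ∑ k ∈ range N, g (x - k * c)) c := by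
  intro x
  cases N with
  | zero => simp
  | succ N =>
    dsimp only
    rw [sum_range_succ', sum_range_succ, ← hg (x - N * c)]
    push_cast
    congr 1
    · exact sum_congr rfl fun k _ => by ring_nf
    · ring_nf

theorem sum_range_two_mul_add_one_sub_mul {M : Type*} [AddCommMonoid M] {g : ℝ → M} {c : ℝ}
    (n : ℕ) (hg : Periodic g ((2 * n + 1) * c)) (x : ℝ) :
    ∑ k ∈ range (2 * n + 1), g (x - k * c) =
      g x + ∑ k ∈ range n, (g (x - (k + 1) * c) + g (x + (k + 1) * c)) := by
  rw [sum_range_succ', two_mul, sum_range_add, sum_add_distrib, add_comm,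
    ← sum_range_reflect (fun k : ℕ => g (x + (k + 1) * c))]
  simp only [Nat.cast_zero, zero_mul, sub_zero, Nat.cast_add, Nat.cast_one]
  congr 2
  refine sum_congr rfl fun k hk => ?_
  have hkn : k + 1 ≤ n := mem_range.mp hk
  rw [← hg, Nat.cast_sub (by omega), Nat.cast_sub (by omega)]
  push_cast
  ring_nf

theorem sum_abs_dirichletKernel_sub_mul_le (n : ℕ) {δ : ℝ} (hδ : |δ| ≤ π / (2 * n + 1)) :
    ∑ k ∈ range (2 * n + 1), |dirichletKernel n (δ - k * (2 * π / (2 * n + 1)))| ≤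
      2 * n + 1 + 2 * ∑ k ∈ range n, 1 / sin ((2 * k + 1) * π / (2 * (2 * n + 1))) := by
  set h := 2 * π / (2 * n + 1) with h_def
  have hN : (0 : ℝ) < 2 * n + 1 := by positivity
  have hh : 0 < h := by positivity
  have hπ : π = (n + 1 / 2) * h := by rw [h_def]; field_simp
  have hδ' : |δ| ≤ h / 2 := by convert hδ using 1; rw [h_def]; ring
  have hper : Periodic (fun x => |dirichletKernel n x|) ((2 * n + 1) * h) := by
    rw [mul_div_cancel₀ _ hN.ne']
    exact (dirichletKernel_periodic n).comp (fun y => |y|)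
  -- the `(k+1)`-th node on either side of `δ` is at distance in `[(k + 1/2) h, (k + 3/2) h]`
  have hside : ∀ k ∈ range n, ∀ y : ℝ, |y| ≤ h / 2 →
      |dirichletKernel n (y + (k + 1) * h)| ≤ 1 / sin ((2 * k + 1) * π / (2 * (2 * n + 1))) := by
    intro k hk y hy
    have hkn : (k : ℝ) + 1 ≤ n := by exact_mod_cast mem_range.mp hk
    obtain ⟨hy₁, hy₂⟩ := abs_le.mp hy
    have hpos : 0 ≤ y + (k + 1) * h := by nlinarith
    apply abs_dirichletKernel_le_inv_sin n (by positivity)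
    · rw [abs_of_nonneg hpos, hπ, h_def]
      field_simp
      nlinarith
    · rw [abs_of_nonneg hpos, hπ]
      nlinarith
  rw [sum_range_two_mul_add_one_sub_mul n hper, two_mul (∑ k ∈ range n, _), ← sum_add_distrib]
  gcongr ?_ + ∑ k ∈ range n, ?_ with k hk
  · exact abs_dirichletKernel_le n δ
  · refine add_le_add ?_ (hside k hk δ hδ')
    rw [← dirichletKernel_neg, neg_sub, sub_eq_neg_add]
    exact hside k hk (-δ) (by rwa [abs_neg])

theorem one_div_sin_le {x : ℝ} (hx : 0 < x) (hxπ : x ≤ π / 2) : 1 / sin x ≤ π / (2 * x) := by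
  have hjordan := mul_le_sin hx.le hxπ
  rw [one_div_le (by nlinarith [pi_pos, div_pos two_pos pi_pos]) (by positivity), one_div_div]
  rwa [mul_div_right_comm]

theorem one_div_sin_pi_div_le {N : ℝ} (hN : 5 ≤ N) : 1 / sin (π / (2 * N)) ≤ 0.66 * N := by
  set t := π / (2 * N) with t_def
  have ht : 0 < t := by positivity
  have htN : t * (2 * N) = π := by rw [t_def]; field_simp
  have ht_sq : t ^ 2 ≤ 0.1 := by nlinarith [pi_lt_d2]
  -- the cubic Taylor bound `sin t > t - t³/6` is within 2% of `t` this close to `0`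
  have hsin : 0.98 * t ≤ sin t := by
    nlinarith [sin_gt_sub_cube ht, mul_le_mul_of_nonneg_left ht_sq ht.le]
  rw [div_le_iff₀ (by linarith)]
  nlinarith [pi_gt_d2]

theorem sum_one_div_sin_odd_mul_le (n : ℕ) (hn : 2 ≤ n) :
    ∑ k ∈ range n, 1 / sin ((2 * k + 1) * π / (2 * (2 * n + 1))) ≤
      (2 * n + 1) * (0.66 + harmonic (n - 1) / 2) := by
  obtain ⟨m, rfl⟩ : ∃ m, n = m + 1 := ⟨n - 1, by omega⟩
  set N : ℝ := 2 * (m + 1 : ℕ) + 1 with N_def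
  have hN : 5 ≤ N := by
    have : (1 : ℝ) ≤ m := by exact_mod_cast (by omega : 1 ≤ m)
    rw [N_def]; push_cast; linarith
  have hterm : ∀ k ∈ range m, 1 / sin ((2 * (k + 1 : ℕ) + 1) * π / (2 * N))
      ≤ N / 2 * (k + 1 : ℝ)⁻¹ := by
    intro k hk
    have hkm : (k : ℝ) + 1 ≤ m := by exact_mod_cast mem_range.mp hk
    have hx : (2 * (k + 1 : ℕ) + 1) * π / (2 * N) ≤ π / 2 := by
      rw [div_le_div_iff₀ (by positivity) two_pos, N_def]
      push_cast
      nlinarith [pi_pos]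
    calc _ ≤ π / (2 * ((2 * (k + 1 : ℕ) + 1) * π / (2 * N))) := one_div_sin_le (by positivity) hx
      _ = N / (2 * k + 3) := by field_simp; push_cast; ring
      _ ≤ N / 2 * (k + 1 : ℝ)⁻¹ := by
        rw [← div_eq_mul_inv, div_div]
        gcongr
        linarith
  rw [sum_range_succ', add_comm, Nat.add_sub_cancel]
  calc _ ≤ 0.66 * N + ∑ k ∈ range m, N / 2 * (k + 1 : ℝ)⁻¹ :=
        add_le_add (by simpa using one_div_sin_pi_div_le hN) (sum_le_sum hterm)
    _ = N * (0.66 + harmonic m / 2) := by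
        simp only [harmonic, Rat.cast_sum, Rat.cast_inv, Rat.cast_natCast, ← mul_sum]
        push_cast
        ring

theorem add_harmonic_le_five_mul_log (n : ℕ) (hn : 2 ≤ n) :
    2.32 + (harmonic (n - 1) : ℝ) ≤ 5 * log n := by
  rcases hn.eq_or_lt with rfl | hn
  · norm_num [harmonic]
    linarith [log_two_gt_d9]
  · have hlog_mono : log (n - 1 : ℕ) ≤ log n :=
      log_le_log (by exact_mod_cast (by omega : 0 < n - 1)) (by exact_mod_cast n.sub_le 1)
    have hlog_one : 1 ≤ log n := by
      rw [le_log_iff_exp_le (by positivity)]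
      calc exp 1 ≤ 3 := (exp_one_lt_d9.trans (by norm_num)).le
        _ ≤ n := by exact_mod_cast hn
    linarith [harmonic_le_one_add_log (n - 1)]

theorem sum_abs_dirichletKernel_sub_node_le (n : ℕ) (hn : 2 ≤ n) (θ : ℝ) :
    ∑ k, |dirichletKernel n (θ - node n k)| ≤ (2 * n + 1) * (2.32 + harmonic (n - 1)) := by
  set h := 2 * π / (2 * n + 1) with h_def
  have hN : (0 : ℝ) < 2 * n + 1 := by positivity
  have hh : 0 < h := by positivity
  have hL : Periodic (fun x => ∑ k ∈ range (2 * n + 1), |dirichletKernel n (x - k * h)|) h := by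
    refine periodic_sum_range_sub_mul (g := fun x => |dirichletKernel n x|) _ ?_
    push_cast
    rw [h_def, mul_div_cancel₀ _ hN.ne']
    exact (dirichletKernel_periodic n).comp (fun y => |y|)
  obtain ⟨δ, ⟨hδ₁, hδ₂⟩, hLδ⟩ := hL.exists_mem_Ico hh θ (-(h / 2))
  have hδ : |δ| ≤ π / (2 * n + 1) := by
    rw [abs_le]; constructor <;> linarith [show h / 2 = π / (2 * n + 1) by rw [h_def]; ring]
  have hnode : ∑ k, |dirichletKernel n (θ - node n k)| =
      ∑ k ∈ range (2 * n + 1), |dirichletKernel n (θ - k * h)| := by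
    rw [← Fin.sum_univ_eq_sum_range]
    exact sum_congr rfl fun k _ => by rw [node, h_def]; ring_nf
  rw [hnode, hLδ]
  calc _ ≤ 2 * n + 1 + 2 * ∑ k ∈ range n, 1 / sin ((2 * k + 1) * π / (2 * (2 * n + 1))) :=
        sum_abs_dirichletKernel_sub_mul_le n hδ
    _ ≤ 2 * n + 1 + 2 * ((2 * n + 1) * (0.66 + harmonic (n - 1) / 2)) := by
        gcongr; exact sum_one_div_sin_odd_mul_le n hn
    _ = (2 * n + 1) * (2.32 + harmonic (n - 1)) := by ring

theorem jackson_bound_trigInterp_general (n : ℕ) (hn : 2 ≤ n) (f : ℝ → ℝ)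
    (fmax : ℝ) (hbound : ∀ k : Fin (2 * n + 1), |f (node n k)| ≤ fmax) :
    ∀ θ : ℝ, |trigInterp n (fun k => f (node n k)) θ| ≤ 5 * fmax * Real.log n := by
  intro θ
  have hN : (0 : ℝ) < 2 * n + 1 := by positivity
  have hfmax : 0 ≤ fmax := (abs_nonneg _).trans (hbound 0)
  calc |trigInterp n (fun k => f (node n k)) θ|
      ≤ 1 / (2 * n + 1) * ∑ k, fmax * |dirichletKernel n (θ - node n k)| := by
        rw [trigInterp_eq_sum_dirichletKernel, abs_mul, abs_of_pos (by positivity)]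
        gcongr
        refine (abs_sum_le_sum_abs _ _).trans (sum_le_sum fun k _ => ?_)
        rw [abs_mul]
        gcongr
        exact hbound k
    _ ≤ 1 / (2 * n + 1) * (fmax * ((2 * n + 1) * (2.32 + harmonic (n - 1)))) := by
        rw [← mul_sum]
        gcongr
        exact sum_abs_dirichletKernel_sub_node_le n hn θ
    _ = fmax * (2.32 + harmonic (n - 1)) := by field_simp
    _ ≤ fmax * (5 * log n) := by gcongr; exact add_harmonic_le_five_mul_log n hn
    _ = 5 * fmax * log n := by ring

/-- Jackson-type bound: if `f` is `2π`-periodic with `|f(θ_k)| ≤ f_max` at the equidistant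
nodes, then the trigonometric interpolant `S_n` of `f` satisfies
`|S_n(θ)| ≤ 5 f_max log n` for all `θ` (for `n ≥ 2`). -/
theorem jackson_bound_trigInterp (n : ℕ) (hn : 2 ≤ n) (f : ℝ → ℝ)
    (hper : ∀ θ : ℝ, f (θ + 2 * Real.pi) = f θ)
    (fmax : ℝ) (hbound : ∀ k : Fin (2 * n + 1), |f (node n k)| ≤ fmax) :
    ∀ θ : ℝ, |trigInterp n (fun k => f (node n k)) θ| ≤ 5 * fmax * Real.log n :=
  jackson_bound_trigInterp_general n hn f fmax hbound
end

section
/- (Shot-count bound for inference error) Fix a ∈ (0,1), δ > 0, and n ≥ 2. If the number of shots satisfies N ≥ 50 log²(n) log((4n+2)/a)/δ², and each node estimate satisfies the Hoeffding tail Pr(|R(θ_k) − R̄(θ_k)| ≥ ε) ≤ 2exp(−Nε²/2), then with probability at least 1 − a the interpolated response satisfies |R(θ) − R̃(θ)| ≤ δ for all θ, where δ = 5ε log(n) and R̃ is the trigonometric interpolant of the estimates at the 2n+1 equidistant nodes. -/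
/-!
Take `ε = δ / (5 log n)`. The shot-count assumption makes each Hoeffding tail at most
`a / (2n+1)`, so by the union bound all `2n+1` node estimates are `ε`-accurate except on an
event of probability at most `a`; on the complementary event the interpolation stability
bound gives `|R θ - R̃ θ| ≤ 5 log n · ε = δ` for every `θ`.
-/

open MeasureTheory ProbabilityTheory

lemma one_sub_le_measure_of_measure_compl_le {α : Type*} [MeasurableSpace α] {μ : Measure α}
    [IsProbabilityMeasure μ] {s : Set α} {b : ENNReal} (h : μ sᶜ ≤ b) : 1 - b ≤ μ s := by
  rw [tsub_le_iff_right]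
  calc 1 = μ Set.univ := measure_univ.symm
    _ ≤ μ s + μ sᶜ := measure_univ_le_add_compl s
    _ ≤ μ s + b := by gcongr

lemma measure_iUnion_le_ofReal_of_forall_le {α ι : Type*} [MeasurableSpace α] [Fintype ι]
    [Nonempty ι] {μ : Measure α} {s : ι → Set α} {a : ℝ}
    (h : ∀ i, μ (s i) ≤ ENNReal.ofReal (a / Fintype.card ι)) :
    μ (⋃ i, s i) ≤ ENNReal.ofReal a := by
  have hcard : (Fintype.card ι : ℝ) ≠ 0 := Nat.cast_ne_zero.2 Fintype.card_ne_zero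
  calc μ (⋃ i, s i) ≤ ∑ i, μ (s i) := measure_iUnion_fintype_le μ s
    _ ≤ ∑ _i : ι, ENNReal.ofReal (a / Fintype.card ι) := Finset.sum_le_sum fun i _ => h i
    _ = ENNReal.ofReal a := by
      rw [Finset.sum_const, Finset.card_univ, nsmul_eq_mul, ← ENNReal.ofReal_natCast,
        ← ENNReal.ofReal_mul (Nat.cast_nonneg _), mul_div_cancel₀ _ hcard]

lemma two_mul_exp_neg_le_div_of_two_mul_log_le {N ε a m : ℝ} (ha : 0 < a) (hm : 0 < m)
    (h : 2 * Real.log (2 * m / a) ≤ N * ε ^ 2) :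
    2 * Real.exp (-N * ε ^ 2 / 2) ≤ a / m := by
  have hexp : Real.exp (-N * ε ^ 2 / 2) ≤ a / (2 * m) :=
    calc Real.exp (-N * ε ^ 2 / 2) ≤ Real.exp (-Real.log (2 * m / a)) :=
          Real.exp_le_exp.2 (by linarith)
      _ = a / (2 * m) := by rw [Real.exp_neg, Real.exp_log (by positivity), inv_div]
  calc 2 * Real.exp (-N * ε ^ 2 / 2) ≤ 2 * (a / (2 * m)) := by gcongr
    _ = a / m := by field_simp

lemma two_mul_le_mul_sq_div_of_le {N L δ c : ℝ} (hL : 0 < L) (hδ : 0 < δ)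
    (hN : N ≥ 50 * L ^ 2 * c / δ ^ 2) : 2 * c ≤ N * (δ / (5 * L)) ^ 2 := by
  rw [ge_iff_le, div_le_iff₀ (by positivity)] at hN
  rw [div_pow, mul_pow, ← mul_div_assoc, le_div_iff₀ (by positivity)]
  linarith

theorem shot_count_inference_bound_general {Ω : Type*} [MeasureSpace Ω]
    [IsProbabilityMeasure (ℙ : Measure Ω)]
    (n N : ℕ) (hn : 2 ≤ n) (a δ : ℝ) (ha : 0 < a) (hδ : 0 < δ)
    (R : ℝ → ℝ) (Rbar : Fin (2 * n + 1) → Ω → ℝ) (Rtilde : Ω → ℝ → ℝ)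
    (hhoeffding : ∀ (k : Fin (2 * n + 1)) (ε : ℝ), 0 < ε →
      ℙ {ω | ε ≤ |R (node n k) - Rbar k ω|} ≤
        ENNReal.ofReal (2 * Real.exp (-(N : ℝ) * ε ^ 2 / 2)))
    (hstab : ∀ (ω : Ω) (θ : ℝ),
      |R θ - Rtilde ω θ| ≤
        5 * Real.log n *
          (Finset.univ.sup' Finset.univ_nonempty fun k => |R (node n k) - Rbar k ω|))
    (hN : (N : ℝ) ≥ 50 * (Real.log n) ^ 2 * Real.log ((4 * (n : ℝ) + 2) / a) / δ ^ 2) :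
    ℙ {ω | ∀ θ : ℝ, |R θ - Rtilde ω θ| ≤ δ} ≥ 1 - ENNReal.ofReal a := by
  have hlog : 0 < Real.log n := Real.log_pos (by exact_mod_cast hn)
  set ε := δ / (5 * Real.log n) with hε_def
  have hε : 0 < ε := by positivity
  have hnode : ∀ k, ℙ {ω | ε ≤ |R (node n k) - Rbar k ω|} ≤
      ENNReal.ofReal (a / Fintype.card (Fin (2 * n + 1))) := by
    intro k
    refine (hhoeffding k ε hε).trans (ENNReal.ofReal_le_ofReal ?_)
    refine two_mul_exp_neg_le_div_of_two_mul_log_le ha (by positivity) ?_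
    rw [Fintype.card_fin, Nat.cast_add, Nat.cast_mul, Nat.cast_ofNat, Nat.cast_one,
      show 2 * (2 * (n : ℝ) + 1) = 4 * n + 2 by ring]
    exact two_mul_le_mul_sq_div_of_le hlog hδ hN
  have hgood : (⋃ k, {ω | ε ≤ |R (node n k) - Rbar k ω|})ᶜ ⊆
      {ω | ∀ θ : ℝ, |R θ - Rtilde ω θ| ≤ δ} := by
    intro ω hω θ
    simp only [Set.mem_compl_iff, Set.mem_iUnion, Set.mem_ofPred_eq, not_exists, not_le] at hω
    calc |R θ - Rtilde ω θ|
        ≤ 5 * Real.log n *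
          (Finset.univ.sup' Finset.univ_nonempty fun k => |R (node n k) - Rbar k ω|) :=
          hstab ω θ
      _ ≤ 5 * Real.log n * ε := by
          gcongr
          exact Finset.sup'_le _ _ fun k _ => (hω k).le
      _ = δ := by rw [hε_def]; field_simp
  exact one_sub_le_measure_of_measure_compl_le
    ((measure_mono (Set.compl_subset_comm.1 hgood)).trans
      (measure_iUnion_le_ofReal_of_forall_le hnode))

/-- Shot-count bound for the inference error: with `N ≥ 50 log²(n) log((4n+2)/a)/δ²` shots,
assuming the Hoeffding tail for each node estimate and the deterministic interpolation
stability bound `|R(θ) − R̃(θ)| ≤ 5 log(n)·max_k|R(θ_k) − R̄(θ_k)|`, the event that the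
inferred response deviates from the true one by more than `δ` somewhere has probability
at most `a`. -/
theorem shot_count_inference_bound {Ω : Type*} [MeasureSpace Ω]
    [IsProbabilityMeasure (ℙ : Measure Ω)]
    (n N : ℕ) (hn : 2 ≤ n) (a δ : ℝ) (ha : 0 < a) (ha1 : a < 1) (hδ : 0 < δ)
    (R : ℝ → ℝ) (Rbar : Fin (2 * n + 1) → Ω → ℝ) (Rtilde : Ω → ℝ → ℝ)
    (hhoeffding : ∀ (k : Fin (2 * n + 1)) (ε : ℝ), 0 < ε →
      ℙ {ω | ε ≤ |R (node n k) - Rbar k ω|} ≤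
        ENNReal.ofReal (2 * Real.exp (-(N : ℝ) * ε ^ 2 / 2)))
    (hstab : ∀ (ω : Ω) (θ : ℝ),
      |R θ - Rtilde ω θ| ≤
        5 * Real.log n *
          (Finset.univ.sup' Finset.univ_nonempty fun k => |R (node n k) - Rbar k ω|))
    (hN : (N : ℝ) ≥ 50 * (Real.log n) ^ 2 * Real.log ((4 * (n : ℝ) + 2) / a) / δ ^ 2) :
    ℙ {ω | ∀ θ : ℝ, |R θ - Rtilde ω θ| ≤ δ} ≥ 1 - ENNReal.ofReal a :=
  shot_count_inference_bound_general n N hn a δ ha hδ R Rbar Rtilde hhoeffding hstab hN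
end
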